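/- There exists a recursive-definition-free λEH program that is typable in the simple (non-ATM) type system ⊢_ST but diverges: the program c = (with h_state handle (let f = λx. get () () in (set f; f ()))) (λx.()) — where h_state = {return x = λs.x, set x k = λs.k () x, get x k = λs.k s s} — is ⊢_ST-typable (with Σ(get) = unit → (unit→unit) and Σ(set) = (unit→unit) → unit) and its evaluation is non-terminating. -/

import Mathlib

namespace LEH

/-! ## Syntax of λEH (finitary PCF with effect handlers), extended with records,
    in de Bruijn representation.  A handler is represented by its return clause
    (one binder) and, for each operation name `o : ℕ`, an operation clause
    (two binders: the parameter `x` at index 1 and the continuation `k` at index 0). -/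

mutual
inductive Val : Type
| var (n : ℕ)
| unit
| tt
| ff
| lam (c : Comp)
| fix (v : Val)              -- rec x = v
| record (f : ℕ → Val)
inductive Comp : Type
| ret (v : Val)
| op (o : ℕ) (v : Val)
| app (v₁ v₂ : Val)
| ite (v : Val) (c₁ c₂ : Comp)
| letin (c₁ c₂ : Comp)
| handle (hret : Comp) (hops : ℕ → Comp) (c : Comp)
| proj (v : Val) (l : ℕ)
end

def liftR (ξ : ℕ → ℕ) : ℕ → ℕ
| 0 => 0
| n+1 => ξ n + 1

mutual
def renameV (ξ : ℕ → ℕ) : Val → Val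
| .var n => .var (ξ n)
| .unit => .unit
| .tt => .tt
| .ff => .ff
| .lam c => .lam (renameC (liftR ξ) c)
| .fix v => .fix (renameV (liftR ξ) v)
| .record f => .record (fun o => renameV ξ (f o))
def renameC (ξ : ℕ → ℕ) : Comp → Comp
| .ret v => .ret (renameV ξ v)
| .op o v => .op o (renameV ξ v)
| .app v₁ v₂ => .app (renameV ξ v₁) (renameV ξ v₂)
| .ite v c₁ c₂ => .ite (renameV ξ v) (renameC ξ c₁) (renameC ξ c₂)
| .letin c₁ c₂ => .letin (renameC ξ c₁) (renameC (liftR ξ) c₂)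
| .handle r ops c =>
    .handle (renameC (liftR ξ) r) (fun o => renameC (liftR (liftR ξ)) (ops o)) (renameC ξ c)
| .proj v l => .proj (renameV ξ v) l
end

def liftS (σ : ℕ → Val) : ℕ → Val
| 0 => .var 0
| n+1 => renameV Nat.succ (σ n)

mutual
def substV (σ : ℕ → Val) : Val → Val
| .var n => σ n
| .unit => .unit
| .tt => .tt
| .ff => .ff
| .lam c => .lam (substC (liftS σ) c)
| .fix v => .fix (substV (liftS σ) v)
| .record f => .record (fun o => substV σ (f o))
def substC (σ : ℕ → Val) : Comp → Comp
| .ret v => .ret (substV σ v)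
| .op o v => .op o (substV σ v)
| .app v₁ v₂ => .app (substV σ v₁) (substV σ v₂)
| .ite v c₁ c₂ => .ite (substV σ v) (substC σ c₁) (substC σ c₂)
| .letin c₁ c₂ => .letin (substC σ c₁) (substC (liftS σ) c₂)
| .handle r ops c =>
    .handle (substC (liftS σ) r) (fun o => substC (liftS (liftS σ)) (ops o)) (substC σ c)
| .proj v l => .proj (substV σ v) l
end

/-- substitution of a single value for de Bruijn index 0 -/
def sub1 (v : Val) : ℕ → Val
| 0 => v
| n+1 => .var n

/-- substitution of two values: index 1 ↦ `x` (operation parameter),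
    index 0 ↦ `k` (captured continuation) -/
def sub2 (x k : Val) : ℕ → Val
| 0 => k
| 1 => x
| n+2 => .var n

def subst1C (c : Comp) (v : Val) : Comp := substC (sub1 v) c
def subst1V (w : Val) (v : Val) : Val := substV (sub1 v) w

/-! ## Evaluation contexts and small-step operational semantics -/

inductive EC : Type
| hole
| letE (E : EC) (c : Comp)

def plug : EC → Comp → Comp
| .hole, c => c
| .letE E c₂, c => .letin (plug E c) c₂

def renameE (ξ : ℕ → ℕ) : EC → EC
| .hole => .hole
| .letE E c => .letE (renameE ξ E) (renameC (liftR ξ) c)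

/-- the captured delimited continuation `λ y. with h handle E[return y]` -/
def contOf (r : Comp) (ops : ℕ → Comp) (E : EC) : Val :=
  .lam (.handle (renameC (liftR Nat.succ) r)
    (fun o => renameC (liftR (liftR Nat.succ)) (ops o))
    (plug (renameE Nat.succ E) (.ret (.var 0))))

inductive Step : Comp → Comp → Prop
| letc {c₁ c₂ c} : Step c₁ c₂ → Step (.letin c₁ c) (.letin c₂ c)
| letret {v c} : Step (.letin (.ret v) c) (subst1C c v)
| lamapp {c v} : Step (.app (.lam c) v) (subst1C c v)
| fixapp {v v'} : Step (.app (.fix v) v') (.app (subst1V v (.fix v)) v')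
| iftrue {c₁ c₂} : Step (.ite .tt c₁ c₂) c₁
| iffalse {c₁ c₂} : Step (.ite .ff c₁ c₂) c₂
| han {r ops c c'} : Step c c' → Step (.handle r ops c) (.handle r ops c')
| hret {r ops v} : Step (.handle r ops (.ret v)) (subst1C r v)
| hop {r ops E o v} :
    Step (.handle r ops (plug E (.op o v)))
      (substC (sub2 v (contOf r ops E)) (ops o))
| projr {f l} : Step (.proj (.record f) l) (.ret (f l))

abbrev StepStar : Comp → Comp → Prop := Relation.ReflTransGen Step
abbrev StepPlus : Comp → Comp → Prop := Relation.TransGen Step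

/-! ## ATM types and subtyping -/

mutual
inductive VTy : Type
| unit
| bool
| arrow (τ : VTy) (ρ : CTy)
inductive CTy : Type
| pure (τ : VTy)
| eff (τ : VTy) (ρ₁ ρ₂ : CTy)
end

mutual
inductive SubV : VTy → VTy → Prop
| unit : SubV .unit .unit
| bool : SubV .bool .bool
| arrow {τ₁ τ₂ ρ₁ ρ₂} : SubV τ₂ τ₁ → SubC ρ₁ ρ₂ → SubV (.arrow τ₁ ρ₁) (.arrow τ₂ ρ₂)
inductive SubC : CTy → CTy → Prop
| pure {τ₁ τ₂} : SubV τ₁ τ₂ → SubC (.pure τ₁) (.pure τ₂)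
| ipure {τ₁ τ₂ ρ₁ ρ₂ ρ₁' ρ₂'} :
    SubV τ₁ τ₂ → SubC ρ₂ ρ₁ → SubC ρ₁' ρ₂' → SubC (.eff τ₁ ρ₁ ρ₁') (.eff τ₂ ρ₂ ρ₂')
| embed {τ₁ τ₂ ρ₁ ρ₂} : SubV τ₁ τ₂ → SubC ρ₁ ρ₂ → SubC (.pure τ₁) (.eff τ₂ ρ₁ ρ₂)
end

/-- An operation signature Σ: each operation `o` has type
    `arg o → res o / ans1 o ⇒ ans2 o`. -/
structure Sig where
  arg : ℕ → VTy
  res : ℕ → VTy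
  ans1 : ℕ → CTy
  ans2 : ℕ → CTy

/-! ## The ATM type system ⊢_ATM -/

mutual
inductive TV : Sig → List VTy → Val → VTy → Prop
| unit {S Γ} : TV S Γ .unit .unit
| tt {S Γ} : TV S Γ .tt .bool
| ff {S Γ} : TV S Γ .ff .bool
| var {S Γ n τ} : Γ[n]? = some τ → TV S Γ (.var n) τ
| lam {S Γ τ c ρ} : TC S (τ :: Γ) c ρ → TV S Γ (.lam c) (.arrow τ ρ)
| fix {S Γ τ v} : TV S (τ :: Γ) v τ → TV S Γ (.fix v) τ
| vsub {S Γ v τ τ'} : TV S Γ v τ → SubV τ τ' → TV S Γ v τ'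
inductive TC : Sig → List VTy → Comp → CTy → Prop
| ret {S Γ v τ} : TV S Γ v τ → TC S Γ (.ret v) (.pure τ)
| app {S Γ v₁ v₂ τ ρ} : TV S Γ v₁ (.arrow τ ρ) → TV S Γ v₂ τ → TC S Γ (.app v₁ v₂) ρ
| ite {S Γ v c₁ c₂ ρ} :
    TV S Γ v .bool → TC S Γ c₁ ρ → TC S Γ c₂ ρ → TC S Γ (.ite v c₁ c₂) ρ
| letP {S Γ c₁ c₂ τ₁ τ₂} :
    TC S Γ c₁ (.pure τ₁) → TC S (τ₁ :: Γ) c₂ (.pure τ₂) →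
    TC S Γ (.letin c₁ c₂) (.pure τ₂)
| letIp {S Γ c₁ c₂ τ₁ τ₂ ρ₁ ρ₁' ρ₂} :
    TC S Γ c₁ (.eff τ₁ ρ₁ ρ₁') → TC S (τ₁ :: Γ) c₂ (.eff τ₂ ρ₂ ρ₁) →
    TC S Γ (.letin c₁ c₂) (.eff τ₂ ρ₂ ρ₁')
| op {S Γ o v} : TV S Γ v (S.arg o) → TC S Γ (.op o v) (.eff (S.res o) (S.ans1 o) (S.ans2 o))
| handle {S Γ r ops c τ ρ ρ'} :
    (∀ o, TC S (.arrow (S.res o) (S.ans1 o) :: S.arg o :: Γ) (ops o) (S.ans2 o)) →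
    TC S (τ :: Γ) r ρ →
    TC S Γ c (.eff τ ρ ρ') →
    TC S Γ (.handle r ops c) ρ'
| csub {S Γ c ρ ρ'} : TC S Γ c ρ → SubC ρ ρ' → TC S Γ c ρ'
end

/-! ## Simple types and the simple type system ⊢_ST (on λEH with records).
    `STy.sig` is the record type `⟦Σ⟧`; the system is parametrized by an
    interpretation `I : ℕ → STy` of its fields and by an operation
    signature `SS`. -/

inductive STy : Type
| unit
| bool
| arrow (σ₁ σ₂ : STy)
| sig

structure SigS where
  arg : ℕ → STy
  res : ℕ → STy

mutual
inductive SV : (ℕ → STy) → SigS → List STy → Val → STy → Prop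
| unit {I SS Γ} : SV I SS Γ .unit .unit
| tt {I SS Γ} : SV I SS Γ .tt .bool
| ff {I SS Γ} : SV I SS Γ .ff .bool
| var {I SS Γ n σ} : Γ[n]? = some σ → SV I SS Γ (.var n) σ
| lam {I SS Γ σ c σ'} : SC I SS (σ :: Γ) c σ' → SV I SS Γ (.lam c) (.arrow σ σ')
| fix {I SS Γ σ v} : SV I SS (σ :: Γ) v σ → SV I SS Γ (.fix v) σ
| record {I SS Γ f} : (∀ o, SV I SS Γ (f o) (I o)) → SV I SS Γ (.record f) .sig
inductive SC : (ℕ → STy) → SigS → List STy → Comp → STy → Prop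
| ret {I SS Γ v σ} : SV I SS Γ v σ → SC I SS Γ (.ret v) σ
| app {I SS Γ v₁ v₂ σ σ'} :
    SV I SS Γ v₁ (.arrow σ σ') → SV I SS Γ v₂ σ → SC I SS Γ (.app v₁ v₂) σ'
| ite {I SS Γ v c₁ c₂ σ} :
    SV I SS Γ v .bool → SC I SS Γ c₁ σ → SC I SS Γ c₂ σ → SC I SS Γ (.ite v c₁ c₂) σ
| letin {I SS Γ c₁ c₂ σ σ'} :
    SC I SS Γ c₁ σ → SC I SS (σ :: Γ) c₂ σ' → SC I SS Γ (.letin c₁ c₂) σ'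
| op {I SS Γ o v} : SV I SS Γ v (SS.arg o) → SC I SS Γ (.op o v) (SS.res o)
| handle {I SS Γ r ops c σ σ'} :
    SC I SS (σ :: Γ) r σ' →
    (∀ o, SC I SS (.arrow (SS.res o) σ' :: SS.arg o :: Γ) (ops o) σ') →
    SC I SS Γ c σ →
    SC I SS Γ (.handle r ops c) σ'
| proj {I SS Γ v l} : SV I SS Γ v .sig → SC I SS Γ (.proj v l) (I l)
end

/-! ## Derivation trees (Type-valued) for subtyping and ATM typing,
    used by the typing-derivation-directed CPS transformation -/

mutual
inductive SubVD : VTy → VTy → Type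
| unit : SubVD .unit .unit
| bool : SubVD .bool .bool
| arrow {τ₁ τ₂ ρ₁ ρ₂} : SubVD τ₂ τ₁ → SubCD ρ₁ ρ₂ → SubVD (.arrow τ₁ ρ₁) (.arrow τ₂ ρ₂)
inductive SubCD : CTy → CTy → Type
| pure {τ₁ τ₂} : SubVD τ₁ τ₂ → SubCD (.pure τ₁) (.pure τ₂)
| ipure {τ₁ τ₂ ρ₁ ρ₂ ρ₁' ρ₂'} :
    SubVD τ₁ τ₂ → SubCD ρ₂ ρ₁ → SubCD ρ₁' ρ₂' → SubCD (.eff τ₁ ρ₁ ρ₁') (.eff τ₂ ρ₂ ρ₂')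
| embed {τ₁ τ₂ ρ₁ ρ₂} : SubVD τ₁ τ₂ → SubCD ρ₁ ρ₂ → SubCD (.pure τ₁) (.eff τ₂ ρ₁ ρ₂)
end

mutual
inductive TVD : Sig → List VTy → Val → VTy → Type
| unit {S Γ} : TVD S Γ .unit .unit
| tt {S Γ} : TVD S Γ .tt .bool
| ff {S Γ} : TVD S Γ .ff .bool
| var {S Γ τ} (n : ℕ) : Γ[n]? = some τ → TVD S Γ (.var n) τ
| lam {S Γ τ c ρ} : TCD S (τ :: Γ) c ρ → TVD S Γ (.lam c) (.arrow τ ρ)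
| fix {S Γ τ v} : TVD S (τ :: Γ) v τ → TVD S Γ (.fix v) τ
| vsub {S Γ v τ τ'} : TVD S Γ v τ → SubVD τ τ' → TVD S Γ v τ'
inductive TCD : Sig → List VTy → Comp → CTy → Type
| ret {S Γ v τ} : TVD S Γ v τ → TCD S Γ (.ret v) (.pure τ)
| app {S Γ v₁ v₂ τ ρ} : TVD S Γ v₁ (.arrow τ ρ) → TVD S Γ v₂ τ → TCD S Γ (.app v₁ v₂) ρ
| ite {S Γ v c₁ c₂ ρ} :
    TVD S Γ v .bool → TCD S Γ c₁ ρ → TCD S Γ c₂ ρ → TCD S Γ (.ite v c₁ c₂) ρ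
| letP {S Γ c₁ c₂ τ₁ τ₂} :
    TCD S Γ c₁ (.pure τ₁) → TCD S (τ₁ :: Γ) c₂ (.pure τ₂) →
    TCD S Γ (.letin c₁ c₂) (.pure τ₂)
| letIp {S Γ c₁ c₂ τ₁ τ₂ ρ₁ ρ₁' ρ₂} :
    TCD S Γ c₁ (.eff τ₁ ρ₁ ρ₁') → TCD S (τ₁ :: Γ) c₂ (.eff τ₂ ρ₂ ρ₁) →
    TCD S Γ (.letin c₁ c₂) (.eff τ₂ ρ₂ ρ₁')
| op {S Γ} (o : ℕ) {v} :
    TVD S Γ v (S.arg o) → TCD S Γ (.op o v) (.eff (S.res o) (S.ans1 o) (S.ans2 o))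
| handle {S Γ r ops c τ ρ ρ'} :
    (∀ o, TCD S (.arrow (S.res o) (S.ans1 o) :: S.arg o :: Γ) (ops o) (S.ans2 o)) →
    TCD S (τ :: Γ) r ρ →
    TCD S Γ c (.eff τ ρ ρ') →
    TCD S Γ (.handle r ops c) ρ'
| csub {S Γ c ρ ρ'} : TCD S Γ c ρ → SubCD ρ ρ' → TCD S Γ c ρ'
end

/-! ## The CPS transformation -/

/-! CPS transformation of ATM value and computation types into simple types;
    `⟦τ/ρ₁⇒ρ₂⟧ = ⟦Σ⟧ → (⟦τ⟧ → ⟦ρ₁⟧) → ⟦ρ₂⟧`, where `⟦Σ⟧` is `STy.sig`. -/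
mutual
def cpsT : VTy → STy
| .unit => .unit
| .bool => .bool
| .arrow τ ρ => .arrow (cpsT τ) (cpsCT ρ)
def cpsCT : CTy → STy
| .pure τ => cpsT τ
| .eff τ ρ₁ ρ₂ => .arrow .sig (.arrow (.arrow (cpsT τ) (cpsCT ρ₁)) (cpsCT ρ₂))
end

/-- the field types of the record type `⟦Σ⟧` -/
def opSTy (S : Sig) : ℕ → STy := fun o =>
  .arrow (cpsT (S.arg o)) (.arrow (.arrow (cpsT (S.res o)) (cpsCT (S.ans1 o))) (cpsCT (S.ans2 o)))

/-- application of a computation to a computation (left-to-right sequencing sugar) -/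
def apc (c₁ c₂ : Comp) : Comp :=
  .letin c₁ (.letin (renameC Nat.succ c₂) (.app (.var 1) (.var 0)))

/-! CPS transformation of subtyping derivations, given as the coercion
    they induce on (already-transformed) terms; the static applications `@`
    of the paper are performed on the fly. -/
mutual
def coerceV : {τ τ' : VTy} → SubVD τ τ' → Val → Val
| _, _, .unit, v => v
| _, _, .bool, v => v
| _, _, .arrow d21 d12, f =>
    .lam (coerceC d12 (.app (renameV Nat.succ f) (coerceV d21 (.var 0))))
def coerceC : {ρ ρ' : CTy} → SubCD ρ ρ' → Comp → Comp
| _, _, .pure d, c => .letin c (.ret (coerceV d (.var 0)))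
| _, _, .ipure dT d21 d12, c =>
    .ret (.lam (.ret (.lam (coerceC d12
      (apc (apc (renameC (fun n => n + 2) c) (.ret (.var 1)))
        (.ret (.lam (coerceC d21 (apc (.ret (.var 1)) (.ret (coerceV dT (.var 0))))))))))))
| _, _, .embed dT dR, c =>
    .ret (.lam (.ret (.lam (coerceC dR
      (.letin (renameC (fun n => n + 2) c)
        (apc (.ret (.var 1)) (.ret (coerceV dT (.var 0)))))))))
end

/-! the typing-derivation-directed CPS transformation -/
mutual
def cpsV {S : Sig} : {Γ : List VTy} → {v : Val} → {τ : VTy} → TVD S Γ v τ → Val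
| _, _, _, .unit => .unit
| _, _, _, .tt => .tt
| _, _, _, .ff => .ff
| _, _, _, .var n _ => .var n
| _, _, _, .lam D => .lam (cpsC D)
| _, _, _, .fix D => .fix (cpsV D)
| _, _, _, .vsub D d => coerceV d (cpsV D)
def cpsC {S : Sig} : {Γ : List VTy} → {c : Comp} → {ρ : CTy} → TCD S Γ c ρ → Comp
| _, _, _, .ret D => .ret (cpsV D)
| _, _, _, .app D₁ D₂ => .app (cpsV D₁) (cpsV D₂)
| _, _, _, .ite Dv D₁ D₂ => .ite (cpsV Dv) (cpsC D₁) (cpsC D₂)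
| _, _, _, .letP D₁ D₂ => .letin (cpsC D₁) (cpsC D₂)
| _, _, _, .letIp D₁ D₂ =>
    .ret (.lam (.ret (.lam (apc (apc (renameC (fun n => n + 2) (cpsC D₁)) (.ret (.var 1)))
      (.ret (.lam (apc (apc (renameC (liftR (fun n => n + 2)) (cpsC D₂)) (.ret (.var 2)))
        (.ret (.var 1)))))))))
| _, _, _, .op o Dv =>
    .ret (.lam (.ret (.lam (apc (apc (.proj (.var 1) o)
      (.ret (renameV (fun n => n + 2) (cpsV Dv)))) (.ret (.var 0))))))
| _, _, _, .handle Dops Dret Dc =>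
    apc (apc (cpsC Dc) (.ret (.record (fun o => .lam (.ret (.lam (cpsC (Dops o))))))))
      (.ret (.lam (cpsC Dret)))
| _, _, _, .csub D d => coerceC d (cpsC D)
end

/-- `⟦D⟧ v_h v_k`: applying a CPS-transformed effectful computation to a
    (translated) handler record and continuation -/
def capp2 (c : Comp) (vh vk : Val) : Comp := apc (apc c (.ret vh)) (.ret vk)

/-! ## Effect-handler-freeness and rec-freeness -/

mutual
def hfV : Val → Prop
| .var _ => True
| .unit => True
| .tt => True
| .ff => True
| .lam c => hfC c
| .fix v => hfV v
| .record f => ∀ o, hfV (f o)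
def hfC : Comp → Prop
| .ret v => hfV v
| .op _ _ => False
| .app v₁ v₂ => hfV v₁ ∧ hfV v₂
| .ite v c₁ c₂ => hfV v ∧ hfC c₁ ∧ hfC c₂
| .letin c₁ c₂ => hfC c₁ ∧ hfC c₂
| .handle _ _ _ => False
| .proj v _ => hfV v
end

mutual
def recFreeV : Val → Prop
| .var _ => True
| .unit => True
| .tt => True
| .ff => True
| .lam c => recFreeC c
| .fix _ => False
| .record f => ∀ o, recFreeV (f o)
def recFreeC : Comp → Prop
| .ret v => recFreeV v
| .op _ v => recFreeV v
| .app v₁ v₂ => recFreeV v₁ ∧ recFreeV v₂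
| .ite v c₁ c₂ => recFreeV v ∧ recFreeC c₁ ∧ recFreeC c₂
| .letin c₁ c₂ => recFreeC c₁ ∧ recFreeC c₂
| .handle r ops c => recFreeC r ∧ (∀ o, recFreeC (ops o)) ∧ recFreeC c
| .proj v _ => recFreeV v
end

end LEH

namespace LEH

def sigmaT : STy := STy.arrow .unit .unit

/-- return clause of the state handler: `return x = λs.x` -/
def hstateRet : Comp := .ret (.lam (.ret (.var 1)))

/-- operation clauses of the state handler: `get x k = λs.k s s` (op 0) and
    `set x k = λs.k () x` (op 1); other (unused) operations get a trivial
    clause of the answer type. -/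
def hstateOps : ℕ → Comp := fun o =>
  if o = 0 then
    .ret (.lam (.letin (.app (.var 1) (.var 0)) (.app (.var 0) (.var 1))))
  else if o = 1 then
    .ret (.lam (.letin (.app (.var 1) .unit) (.app (.var 0) (.var 3))))
  else .ret (.lam (.ret .unit))

/-- `λx. get () ()` -/
def vF : Val := .lam (.letin (.op 0 .unit) (.app (.var 0) .unit))

/-- `(with h_state handle (let f = λx. get () () in (set f; f ()))) (λx.())` -/
def cex5 : Comp :=
  .letin (.handle hstateRet hstateOps
      (.letin (.ret vF) (.letin (.op 1 (.var 0)) (.app (.var 1) .unit))))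
    (.app (.var 0) (.lam (.ret .unit)))

/-- the simple-type signature: `get : unit → (unit→unit)`, `set : (unit→unit) → unit` -/
def SS16 : SigS :=
  ⟨fun o => if o = 0 then .unit else if o = 1 then sigmaT else .unit,
   fun o => if o = 0 then sigmaT else .unit⟩

end LEH

/-!
Evaluation in λEH is deterministic. Once `set` has stored `v_f = λ_. get () ()` as the state,
evaluation reaches `(with h_state handle v_f ()) v_f`; there `get` hands `v_f` back as the
state, and six steps later the same configuration recurs. A deterministic computation that
enters a cycle never reaches a normal form such as `return v`.
-/

section Cycle

variable {α : Type*} {r : α → α → Prop} {a b c : α}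

theorem Relation.TransGen.self_of_reflTransGen (U : Relator.RightUnique r)
    (hb : Relation.TransGen r b b) (hbc : Relation.ReflTransGen r b c) :
    Relation.TransGen r c c := by
  induction hbc with
  | refl => exact hb
  | tail _ hcd ih =>
    obtain ⟨e, hce, hec⟩ := Relation.TransGen.head'_iff.mp ih
    cases U hcd hce
    exact Relation.TransGen.tail' hec hcd

theorem Relation.not_reflTransGen_of_cycle (U : Relator.RightUnique r)
    (hab : Relation.ReflTransGen r a b) (hb : Relation.TransGen r b b) (hc : ∀ d, ¬ r c d) :
    ¬ Relation.ReflTransGen r a c := by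
  intro hac
  have hcc : Relation.TransGen r c c := by
    rcases hab.total_of_right_unique U hac with hbc | hcb
    · exact hb.self_of_reflTransGen U hbc
    · rcases hcb.cases_head with rfl | ⟨d, hcd, -⟩
      · exact hb
      · exact absurd hcd (hc d)
  obtain ⟨d, hcd, -⟩ := Relation.TransGen.head'_iff.mp hcc
  exact hc d hcd

end Cycle

namespace LEH

theorem not_step_ret {v : Val} {c : Comp} : ¬ Step (.ret v) c := nofun

theorem plug_op_ne_ret (E : EC) (o : ℕ) (v w : Val) : plug E (.op o v) ≠ .ret w := by
  cases E <;> simp [plug]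

theorem not_step_plug_op (E : EC) (o : ℕ) (v : Val) {c : Comp} :
    ¬ Step (plug E (.op o v)) c := by
  induction E generalizing c with
  | hole => nofun
  | letE E c₂ ih =>
    intro h
    rw [plug] at h
    generalize hE : plug E (.op o v) = c₁ at h
    cases h with
    | letc h => subst hE; exact ih h
    | letret => exact plug_op_ne_ret E o v _ hE

theorem plug_op_inj {E E' : EC} {o o' : ℕ} {v v' : Val} :
    plug E (.op o v) = plug E' (.op o' v') ↔ E = E' ∧ o = o' ∧ v = v' := by
  refine ⟨fun h => ?_, by rintro ⟨rfl, rfl, rfl⟩; rfl⟩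
  induction E generalizing E' with
  | hole => cases E' <;> simp_all [plug]
  | letE E c ih =>
    cases E' with
    | hole => simp [plug] at h
    | letE E' c' =>
      simp only [plug, Comp.letin.injEq] at h
      obtain ⟨rfl, rfl, rfl⟩ := ih h.1
      exact ⟨by rw [h.2], rfl, rfl⟩

theorem Step.handle_cases {r : Comp} {ops : ℕ → Comp} {c c' : Comp}
    (h : Step (.handle r ops c) c') :
    (∃ c₁, Step c c₁ ∧ c' = .handle r ops c₁) ∨
    (∃ v, c = .ret v ∧ c' = subst1C r v) ∨
    (∃ E o v, c = plug E (.op o v) ∧ c' = substC (sub2 v (contOf r ops E)) (ops o)) := by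
  generalize hd : Comp.handle r ops c = d at h
  cases h <;> simp only [reduceCtorEq, Comp.handle.injEq] at hd
  all_goals obtain ⟨rfl, rfl, rfl⟩ := hd
  · exact Or.inl ⟨_, ‹_›, rfl⟩
  · exact Or.inr (Or.inl ⟨_, rfl, rfl⟩)
  · exact Or.inr (Or.inr ⟨_, _, _, rfl, rfl⟩)

theorem Step.right_unique : Relator.RightUnique Step := by
  intro c c₁ c₂ h₁ h₂
  induction h₁ generalizing c₂ with
  | letc h ih =>
    cases h₂ with
    | letc h' => rw [ih h']
    | letret => exact absurd h not_step_ret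
  | letret =>
    cases h₂ with
    | letc h' => exact absurd h' not_step_ret
    | letret => rfl
  | lamapp => cases h₂; rfl
  | fixapp => cases h₂; rfl
  | iftrue => cases h₂; rfl
  | iffalse => cases h₂; rfl
  | projr => cases h₂; rfl
  | han h ih =>
    rcases h₂.handle_cases with ⟨c', h', rfl⟩ | ⟨w, rfl, -⟩ | ⟨E, o, v, rfl, -⟩
    · rw [ih h']
    · exact absurd h not_step_ret
    · exact absurd h (not_step_plug_op E o v)
  | hret =>
    rcases h₂.handle_cases with ⟨c', h', -⟩ | ⟨w, hw, rfl⟩ | ⟨E, o, v, hE, -⟩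
    · exact absurd h' not_step_ret
    · cases hw; rfl
    · exact absurd hE.symm (plug_op_ne_ret E o v _)
  | hop =>
    rcases h₂.handle_cases with ⟨c', h', -⟩ | ⟨w, hw, -⟩ | ⟨E, o, v, hE, rfl⟩
    · exact absurd h' (not_step_plug_op _ _ _)
    · exact absurd hw (plug_op_ne_ret _ _ _ _)
    · obtain ⟨rfl, rfl, rfl⟩ := plug_op_inj.mp hE
      rfl

-- The clauses of `h_state` are closed: this is what makes the captured continuations recur verbatim.
theorem renameC_hstateOps (ξ : ℕ → ℕ) (o : ℕ) :
    renameC (liftR (liftR ξ)) (hstateOps o) = hstateOps o := by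
  rcases o with _ | _ | o <;> rfl

theorem substC_hstateOps (σ : ℕ → Val) (o : ℕ) :
    substC (liftS (liftS σ)) (hstateOps o) = hstateOps o := by
  rcases o with _ | _ | o <;> rfl

/-- `(with h_state handle v_f ()) v_f` -/
def loopState : Comp := .letin (.handle hstateRet hstateOps (.app vF .unit)) (.app (.var 0) vF)

theorem cex5_reaches_loopState : StepStar cex5 loopState := by
  refine .head (.letc (.han .letret)) ?_
  refine .head (.letc (.hop (E := .letE .hole _))) ?_
  refine .head .letret ?_
  refine .head .lamapp ?_
  refine .head (.letc .lamapp) ?_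
  simp only [subst1C, substC, substV, contOf, renameC, renameC_hstateOps, substC_hstateOps]
  exact .single (.letc (.han .letret))

theorem loopState_cycle : StepPlus loopState loopState := by
  refine .head (.letc (.han .lamapp)) ?_
  refine .head (.letc (.hop (E := .letE .hole _))) ?_
  refine .head .letret ?_
  refine .head .lamapp ?_
  refine .head (.letc .lamapp) ?_
  simp only [subst1C, substC, substV, contOf, renameC, renameC_hstateOps, substC_hstateOps]
  exact .single (.letc (.han .letret))

theorem recFreeC_cex5 : recFreeC cex5 := by
  have hops : ∀ o, recFreeC (hstateOps o) := by
    rintro (_ | _ | o) <;> simp [hstateOps, recFreeC, recFreeV]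
  simp [cex5, recFreeC, recFreeV, hstateRet, vF, hops]

-- The handler's answer type is the state-passing type `(unit → unit) → unit`, shared by all clauses.
theorem cex5_st_typable : SC (fun _ => STy.unit) SS16 [] cex5 STy.unit := by
  refine .letin (σ := .arrow sigmaT .unit) (.handle (σ := .unit) ?_ ?_ ?_)
    (.app (.var rfl) (.lam (.ret .unit)))
  · exact .ret (.lam (.ret (.var rfl)))
  · rintro (_ | _ | o)
    · exact .ret (.lam (.letin (.app (.var rfl) (.var rfl)) (.app (.var rfl) (.var rfl))))
    · exact .ret (.lam (.letin (.app (.var rfl) .unit) (.app (.var rfl) (.var rfl))))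
    · exact .ret (.lam (σ := sigmaT) (.ret .unit))
  · have hvF : SV (fun _ => STy.unit) SS16 [] vF sigmaT :=
      .lam (.letin (.op .unit) (.app (.var rfl) .unit))
    exact .letin (.ret hvF) (.letin (.op (.var rfl)) (.app (.var rfl) .unit))

/-- `cex5` is a recursive-definition-free program that is `⊢_ST`-typable but
    diverges. -/
theorem cex5_st_typable_and_diverges :
    recFreeC cex5 ∧
    SC (fun _ => STy.unit) SS16 [] cex5 STy.unit ∧
    ¬ ∃ v, StepStar cex5 (Comp.ret v) := by
  refine ⟨recFreeC_cex5, cex5_st_typable, ?_⟩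
  rintro ⟨v, hv⟩
  exact Relation.not_reflTransGen_of_cycle Step.right_unique cex5_reaches_loopState
    loopState_cycle (fun _ => not_step_ret) hv

end LEH
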